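/- There exists an infinite orthonormal sequence {φ_n}_{n ∈ ℤ} in L²(ℝ) and a finite constant c > 0 such that for every n: μ(φ_n) = 0, μ(φ̂_n) = 0, and Δ(φ_n)·Δ(φ̂_n) = c. (For instance, take a real-valued even C^∞ function φ with supp(φ) ⊂ [−2,−1] ∪ [1,2] and ‖φ‖₂ = 1, and set φ_n(x) = 2^{n/2} φ(2^n x).) -/

import Mathlib

/-!
The dilation `f ↦ √a f(a ·)` is unitary on `L²(ℝ)`, becomes the dilation by `a⁻¹` under the
Fourier transform, and multiplies the time dispersion by `a⁻¹`; so it leaves the product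
`Δ(f) Δ(f̂)` unchanged. Take an even Schwartz function `Ψ` of unit `L²` norm supported in the
annulus `1 < |x| < 2` and put `φₙ = √(2ⁿ) Ψ(2ⁿ ·)`. The `φₙ` live on disjoint dyadic annuli,
hence are orthonormal; `|φₙ|` and `|φ̂ₙ|` are even, hence have zero mean; and
`Δ(φₙ) Δ(φ̂ₙ) = Δ(Ψ) Δ(Ψ̂)`, which is finite since `Ψ` and `Ψ̂` are Schwartz functions and
positive since neither vanishes.
-/

open MeasureTheory Filter Real
open scoped ENNReal FourierTransform ComplexConjugate

noncomputable section

/-- The time mean `μ(f) = ∫ t |f t|² dt`. -/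
def timeMean (f : ℝ → ℂ) : ℝ := ∫ t, t * ‖f t‖ ^ 2

/-- The time dispersion `Δ(f) = (∫ (t - μ(f))² |f t|² dt)^(1/2)`, valued in `[0, ∞]`. -/
def timeDisp (f : ℝ → ℂ) : ℝ≥0∞ :=
  (∫⁻ t, ENNReal.ofReal ((t - timeMean f) ^ 2) * (‖f t‖₊ : ℝ≥0∞) ^ 2) ^ (1 / 2 : ℝ)

open Function Set
open scoped SchwartzMap ContDiff

theorem lintegral_comp_mul_left (F : ℝ → ℝ≥0∞) {a : ℝ} (ha : a ≠ 0) :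
    ∫⁻ x, F (a * x) = ENNReal.ofReal |a⁻¹| * ∫⁻ x, F x := by
  rw [← smul_eq_mul, ← lintegral_smul_measure, ← Real.map_volume_mul_left ha,
    (measurableEmbedding_mulLeft₀ ha).lintegral_map]

theorem Function.Even.fourier {V E : Type*} [NormedAddCommGroup V] [InnerProductSpace ℝ V]
    [MeasurableSpace V] [BorelSpace V] [FiniteDimensional ℝ V] [NormedAddCommGroup E]
    [NormedSpace ℂ E] {f : V → E} (hf : f.Even) : (𝓕 f).Even := fun ξ => by
  rw [← Real.fourierInv_eq_fourier_neg, Real.fourierInv_eq_fourier_comp_neg,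
    show (fun x => f (-x)) = f from funext hf]

theorem integral_conj_mul_self {α : Type*} [MeasurableSpace α] {μ : Measure α} (f : α → ℂ) :
    ∫ t, conj (f t) * f t ∂μ = ((∫ t, ‖f t‖ ^ 2 ∂μ : ℝ) : ℂ) := by
  simp_rw [Complex.conj_mul', ← Complex.ofReal_pow]
  exact integral_complex_ofReal

theorem timeMean_eq_zero_of_even {f : ℝ → ℂ} (hf : (fun t => ‖f t‖).Even) : timeMean f = 0 := by
  have h : timeMean f = -timeMean f := by
    conv_lhs => rw [timeMean, ← integral_neg_eq_self]
    rw [timeMean, ← integral_neg]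
    congr 1 with x
    rw [show ‖f (-x)‖ = ‖f x‖ from hf x]
    ring
  linarith

theorem timeDisp_eq_lintegral (f : ℝ → ℂ) :
    timeDisp f = (∫⁻ t, ENNReal.ofReal ((t - timeMean f) ^ 2 * ‖f t‖ ^ 2)) ^ (1 / 2 : ℝ) := by
  simp_rw [ENNReal.ofReal_mul (sq_nonneg _), ENNReal.ofReal_pow (norm_nonneg _),
    ofReal_norm]
  rfl

theorem timeDisp_lt_top {f : ℝ → ℂ}
    (hf : Integrable fun t => (t - timeMean f) ^ 2 * ‖f t‖ ^ 2) : timeDisp f < ⊤ := by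
  rw [timeDisp_eq_lintegral]
  exact ENNReal.rpow_lt_top_of_nonneg (by norm_num) hf.lintegral_lt_top.ne

theorem timeDisp_pos {f : ℝ → ℂ} (hf : AEMeasurable f) (h : ¬ f =ᵐ[volume] 0) :
    0 < timeDisp f := by
  rw [timeDisp_eq_lintegral]
  refine ENNReal.rpow_pos_of_nonneg (pos_iff_ne_zero.2 fun h0 => h ?_) (by norm_num)
  have hmeas : AEMeasurable fun t => ENNReal.ofReal ((t - timeMean f) ^ 2 * ‖f t‖ ^ 2) := by
    fun_prop
  filter_upwards [(lintegral_eq_zero_iff' hmeas).1 h0, Measure.ae_ne volume (timeMean f)]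
    with t ht hne
  rw [Pi.zero_apply, ENNReal.ofReal_eq_zero] at ht
  have hsq : 0 < (t - timeMean f) ^ 2 := sq_pos_iff.2 (sub_ne_zero.2 hne)
  simpa using nonpos_of_mul_nonpos_right ht hsq

def dilate (a : ℝ) (f : ℝ → ℂ) (x : ℝ) : ℂ := √a * f (a * x)

section dilate

variable {a : ℝ} {f : ℝ → ℂ}

theorem norm_dilate_sq (ha : 0 ≤ a) (x : ℝ) : ‖dilate a f x‖ ^ 2 = a * ‖f (a * x)‖ ^ 2 := by
  rw [dilate, norm_mul, mul_pow, Complex.norm_real, norm_eq_abs, sq_abs, sq_sqrt ha]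

theorem Function.Even.dilate (hf : f.Even) : (dilate a f).Even := fun x => by
  simp only [_root_.dilate, mul_neg, hf (a * x)]

theorem integral_norm_dilate_sq (ha : 0 < a) : ∫ x, ‖dilate a f x‖ ^ 2 = ∫ x, ‖f x‖ ^ 2 := by
  simp_rw [norm_dilate_sq ha.le, integral_const_mul,
    Measure.integral_comp_mul_left (fun x => ‖f x‖ ^ 2), abs_inv, abs_of_pos ha, smul_eq_mul,
    mul_inv_cancel_left₀ ha.ne']

theorem timeMean_dilate (ha : 0 < a) : timeMean (dilate a f) = a⁻¹ * timeMean f := by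
  have h : ∀ t, t * ‖dilate a f t‖ ^ 2 = (a * t) * ‖f (a * t)‖ ^ 2 := fun t => by
    rw [norm_dilate_sq ha.le]; ring
  simp_rw [timeMean, h, Measure.integral_comp_mul_left (fun t => t * ‖f t‖ ^ 2), abs_inv,
    abs_of_pos ha, smul_eq_mul]

theorem timeDisp_dilate (ha : 0 < a) :
    timeDisp (dilate a f) = ENNReal.ofReal a⁻¹ * timeDisp f := by
  have h : ∀ t, (t - timeMean (dilate a f)) ^ 2 * ‖dilate a f t‖ ^ 2 =
      a⁻¹ * ((a * t - timeMean f) ^ 2 * ‖f (a * t)‖ ^ 2) := fun t => by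
    rw [norm_dilate_sq ha.le, timeMean_dilate ha]; field_simp
  simp_rw [timeDisp_eq_lintegral, h, ENNReal.ofReal_mul (inv_nonneg.2 ha.le),
    lintegral_const_mul' _ _ ENNReal.ofReal_ne_top,
    lintegral_comp_mul_left (fun t => ENNReal.ofReal ((t - timeMean f) ^ 2 * ‖f t‖ ^ 2)) ha.ne',
    abs_inv, abs_of_pos ha, ← mul_assoc,
    ENNReal.mul_rpow_of_nonneg _ _ (by norm_num : (0 : ℝ) ≤ 1 / 2),
    ← ENNReal.rpow_add_of_nonneg (1 / 2 : ℝ) (1 / 2) (by norm_num) (by norm_num)]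
  norm_num

theorem fourier_dilate (ha : 0 < a) : 𝓕 (dilate a f) = dilate a⁻¹ (𝓕 f) := by
  ext ξ
  set G : ℝ → ℂ := fun y => 𝐞 (-(y * (a⁻¹ * ξ))) • f y
  have hG : ∀ v, 𝐞 (-(v * ξ)) • dilate a f v = (√a : ℂ) • G (a * v) := fun v => by
    simp only [G, dilate, Circle.smul_def, smul_eq_mul]
    rw [show a * v * (a⁻¹ * ξ) = v * ξ by field_simp]
    ring
  have hsqrt : √a * |a⁻¹| = √a⁻¹ := by
    rw [abs_of_pos (inv_pos.2 ha), Real.sqrt_inv]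
    field_simp
    exact Real.sq_sqrt ha.le
  simp_rw [Real.fourier_real_eq, hG, integral_smul, Measure.integral_comp_mul_left G, dilate,
    Complex.real_smul, smul_eq_mul, ← mul_assoc, ← Complex.ofReal_mul, hsqrt, Real.fourier_real_eq]
  rfl

theorem timeDisp_mul_timeDisp_fourier_dilate (ha : 0 < a) :
    timeDisp (dilate a f) * timeDisp (𝓕 (dilate a f)) = timeDisp f * timeDisp (𝓕 f) := by
  rw [fourier_dilate ha, timeDisp_dilate ha, timeDisp_dilate (inv_pos.2 ha), inv_inv,
    mul_mul_mul_comm, ← ENNReal.ofReal_mul (inv_nonneg.2 ha.le), inv_mul_cancel₀ ha.ne',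
    ENNReal.ofReal_one, one_mul]

end dilate

theorem eq_of_zpow_mul_mem_Ioo {b s : ℝ} (hb : 1 < b) {n m : ℤ} (hn : b ^ n * s ∈ Ioo 1 b)
    (hm : b ^ m * s ∈ Ioo 1 b) : n = m := by
  have key : ∀ {n m : ℤ}, b ^ n * s ∈ Ioo 1 b → b ^ m * s ∈ Ioo 1 b → ¬ n < m := by
    intro n m hn hm hlt
    have hs : 0 < s := pos_of_mul_pos_right (one_pos.trans hn.1) (zpow_nonneg (by linarith) n)
    have : b * (b ^ n * s) ≤ b ^ m * s := by
      rw [← mul_assoc, ← zpow_one_add₀ (by linarith)]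
      gcongr
      · linarith
      · omega
    nlinarith [hn.1, hm.2]
  exact le_antisymm (not_lt.1 (key hm hn)) (not_lt.1 (key hn hm))

theorem conj_dilate_mul_dilate_eq_zero {f : ℝ → ℂ} (hf : support f ⊆ {x | |x| ∈ Ioo 1 2})
    {n m : ℤ} (hnm : n ≠ m) (t : ℝ) :
    conj (dilate (2 ^ n) f t) * dilate (2 ^ m) f t = 0 := by
  have hmem : ∀ k : ℤ, dilate (2 ^ k) f t ≠ 0 → (2 : ℝ) ^ k * |t| ∈ Ioo 1 2 := fun k hk => by
    have : f (2 ^ k * t) ≠ 0 := right_ne_zero_of_mul hk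
    simpa [abs_mul] using hf this
  by_contra h
  exact hnm (eq_of_zpow_mul_mem_Ioo one_lt_two (hmem n (by simpa using left_ne_zero_of_mul h))
    (hmem m (right_ne_zero_of_mul h)))

namespace SchwartzMap

theorem integrable_pow_mul_norm_sq {F : Type*} [NormedAddCommGroup F] [NormedSpace ℝ F]
    (f : 𝓢(ℝ, F)) (k : ℕ) : Integrable fun t : ℝ => t ^ k * ‖f t‖ ^ 2 := by
  refine ((f.integrable_pow_mul volume k).mul_const (SchwartzMap.seminorm ℝ 0 0 f)).mono'
    ((continuous_pow k).mul (f.continuous.norm.pow 2)).aestronglyMeasurable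
    (ae_of_all _ fun t => ?_)
  rw [norm_mul, norm_pow, norm_pow, norm_norm, sq, ← mul_assoc]
  exact mul_le_mul_of_nonneg_left (f.norm_le_seminorm ℝ t) (by positivity)

theorem timeDisp_lt_top (f : 𝓢(ℝ, ℂ)) : timeDisp f < ⊤ := by
  have h := f.integrable_pow_mul_norm_sq
  refine _root_.timeDisp_lt_top <|
    (((h 2).sub ((h 1).const_mul (2 * timeMean f))).add ((h 0).const_mul (timeMean f ^ 2))).congr
      (ae_of_all _ fun t => ?_)
  simp only [Pi.add_apply, Pi.sub_apply]
  ring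

theorem timeDisp_pos {f : 𝓢(ℝ, ℂ)} (hf : f ≠ 0) : 0 < timeDisp f :=
  _root_.timeDisp_pos f.continuous.aemeasurable fun h =>
    hf (ext (congrFun ((f.continuous.ae_eq_iff_eq volume continuous_const).1 h)))

theorem exists_coe_eq_dilate (f : 𝓢(ℝ, ℂ)) {a : ℝ} (ha : a ≠ 0) :
    ∃ g : 𝓢(ℝ, ℂ), ⇑g = dilate a f :=
  ⟨(√a : ℂ) • compCLMOfContinuousLinearEquiv ℂ
    (ContinuousLinearEquiv.unitsEquivAut ℝ (Units.mk0 a ha)) f, by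
    ext x; simp [dilate, mul_comm x]⟩

end SchwartzMap

theorem exists_contDiff_even_support_subset_annulus :
    ∃ ψ : ℝ → ℂ, ContDiff ℝ ∞ ψ ∧ ψ.Even ∧ support ψ ⊆ {x | |x| ∈ Ioo 1 2} ∧ ψ ≠ 0 := by
  let b : ContDiffBump (3 / 2 : ℝ) := ⟨1 / 4, 1 / 2, by norm_num, by norm_num⟩
  have hb : support b = Ioo 1 2 := by
    rw [b.support_eq, Real.ball_eq_Ioo]
    norm_num [b]
  refine ⟨fun x => ((b x + b (-x) : ℝ) : ℂ),
    Complex.ofRealCLM.contDiff.comp (b.contDiff.add (b.contDiff.comp contDiff_neg)),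
    fun x => by simp [add_comm], fun x hx => ?_, fun h => ?_⟩
  · have : b x ≠ 0 ∨ b (-x) ≠ 0 := by
      by_contra! h
      simp [h] at hx
    rcases this with h | h
    · have h' : x ∈ Ioo 1 2 := hb ▸ h
      simpa [abs_of_pos (one_pos.trans h'.1)] using h'
    · have h' : -x ∈ Ioo 1 2 := hb ▸ h
      simpa [abs_of_neg (neg_pos.1 (one_pos.trans h'.1))] using h'
  · have h₁ : b (3 / 2) = 1 := b.one_of_mem_closedBall (Metric.mem_closedBall_self (by norm_num))
    have h₀ := congrFun h (3 / 2)
    simp only [h₁, Pi.zero_apply, Complex.ofReal_eq_zero] at h₀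
    linarith [b.nonneg (x := -(3 / 2))]

theorem exists_even_schwartzMap_support_subset_annulus :
    ∃ Ψ : 𝓢(ℝ, ℂ), (⇑Ψ).Even ∧ support Ψ ⊆ {x | |x| ∈ Ioo 1 2} ∧ ∫ x, ‖Ψ x‖ ^ 2 = 1 := by
  obtain ⟨ψ, hsmooth, heven, hsupp, hne⟩ := exists_contDiff_even_support_subset_annulus
  have hcs : HasCompactSupport ψ :=
    .of_support_subset_isCompact (isCompact_Icc (a := -2) (b := 2))
      (hsupp.trans fun x hx => abs_le.1 hx.2.le)
  obtain ⟨x₀, hx₀⟩ := ne_iff.1 hne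
  have hN : 0 < ∫ x, ‖ψ x‖ ^ 2 :=
    (hsmooth.continuous.norm.pow 2).integral_pos_of_hasCompactSupport_nonneg_nonzero
      (hcs.comp_left (g := fun z : ℂ => ‖z‖ ^ 2) (by simp)) (fun x => by positivity)
      (x := x₀) (by simpa using hx₀)
  refine ⟨((√(∫ x, ‖ψ x‖ ^ 2))⁻¹ : ℂ) • hcs.toSchwartzMap hsmooth, fun x => by simp [heven x],
    (support_const_smul_subset _ _).trans hsupp, ?_⟩
  simp_rw [smul_apply, norm_smul, mul_pow, integral_const_mul]
  change _ * ∫ x, ‖ψ x‖ ^ 2 = 1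
  rw [norm_inv, Complex.norm_real, norm_of_nonneg (sqrt_nonneg _), inv_pow, sq_sqrt hN.le,
    inv_mul_cancel₀ hN.ne']

/-- There is an infinite orthonormal sequence `{φₙ}_{n ∈ ℤ}` in `L²(ℝ)` and a constant
`0 < c < ∞` with `μ(φₙ) = 0`, `μ(φ̂ₙ) = 0` and `Δ(φₙ)·Δ(φ̂ₙ) = c` for every `n`. -/
theorem exists_orthonormal_sequence_zero_means_const_dispersion_product :
    ∃ (φ : ℤ → ℝ → ℂ) (c : ℝ≥0∞), 0 < c ∧ c ≠ ⊤ ∧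
      -- each `φₙ` lies in `L¹ ∩ L²` (so `𝓕 (φ n)` is its genuine Fourier transform)
      (∀ n, Integrable (φ n) (volume : Measure ℝ)) ∧
      (∀ n, MemLp (φ n) 2 (volume : Measure ℝ)) ∧
      -- orthonormality
      (∀ n m, ∫ t, conj (φ n t) * φ m t = if n = m then (1 : ℂ) else 0) ∧
      -- zero time means and zero frequency means (both well defined)
      (∀ n, Integrable (fun t => t * ‖φ n t‖ ^ 2) (volume : Measure ℝ) ∧ timeMean (φ n) = 0) ∧
      (∀ n, Integrable (fun t => t * ‖𝓕 (φ n) t‖ ^ 2) (volume : Measure ℝ) ∧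
        timeMean (𝓕 (φ n)) = 0) ∧
      -- constant product of dispersions
      (∀ n, timeDisp (φ n) * timeDisp (𝓕 (φ n)) = c) := by
  obtain ⟨Ψ, hΨ_even, hΨ_supp, hΨ_norm⟩ := exists_even_schwartzMap_support_subset_annulus
  have hΨ_ne : Ψ ≠ 0 := by rintro rfl; simp at hΨ_norm
  have h𝓕Ψ_ne : 𝓕 Ψ ≠ 0 := fun h => hΨ_ne (by simpa using congrArg 𝓕⁻ h)
  have ha (n : ℤ) : (0 : ℝ) < 2 ^ n := zpow_pos two_pos n
  choose φ hφ using fun n => Ψ.exists_coe_eq_dilate (ha n).ne'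
  choose φ' hφ' using fun n => (𝓕 Ψ).exists_coe_eq_dilate (inv_pos.2 (ha n)).ne'
  have hfourier (n : ℤ) : 𝓕 ⇑(φ n) = φ' n := by
    rw [hφ, hφ', SchwartzMap.fourier_coe, fourier_dilate (ha n)]
  refine ⟨fun n => φ n, timeDisp Ψ * timeDisp (𝓕 Ψ : 𝓢(ℝ, ℂ)), ?_, ?_, fun n => (φ n).integrable,
    fun n => (φ n).memLp 2, fun n m => ?_, fun n => ⟨?_, ?_⟩, fun n => ⟨?_, ?_⟩, fun n => ?_⟩
  · exact ENNReal.mul_pos (SchwartzMap.timeDisp_pos hΨ_ne).ne'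
      (SchwartzMap.timeDisp_pos h𝓕Ψ_ne).ne'
  · exact ENNReal.mul_ne_top Ψ.timeDisp_lt_top.ne (𝓕 Ψ).timeDisp_lt_top.ne
  · dsimp only
    split_ifs with h
    · rw [h, integral_conj_mul_self, hφ, integral_norm_dilate_sq (ha m), hΨ_norm,
        Complex.ofReal_one]
    · simp [hφ, conj_dilate_mul_dilate_eq_zero hΨ_supp h]
  · simpa using (φ n).integrable_pow_mul_norm_sq 1
  · dsimp only
    rw [hφ]
    exact timeMean_eq_zero_of_even fun t => congrArg norm (hΨ_even.dilate t)
  · simpa [hfourier] using (φ' n).integrable_pow_mul_norm_sq 1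
  · dsimp only
    rw [hfourier, hφ', SchwartzMap.fourier_coe]
    exact timeMean_eq_zero_of_even fun t => congrArg norm (hΨ_even.fourier.dilate t)
  · dsimp only
    rw [hφ, timeDisp_mul_timeDisp_fourier_dilate (ha n), SchwartzMap.fourier_coe]
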